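/- arXiv:2605.21107 — 5 statements merged into one kernel-verified Lean document; each statement's English description precedes it below -/
import Mathlib

section
/- Let K_0 ⊇ K_1 ⊇ ⋯ ⊇ K_T be a nested sequence of nonempty closed convex subsets of ℝ^d, let x_1 ∈ K_0, let e_1, …, e_T ∈ ℝ^d, and define x_{t+1} = Π_{K_t}(x_t − e_t) for 1 ≤ t ≤ T. Then the iterates satisfy the approximate self-contraction property: for all indices 1 ≤ i ≤ j ≤ k ≤ T + 1, ‖x_j − x_k‖ ≤ ‖x_i − x_k‖ + Σ_{r=i}^{j−1} ‖e_r‖, where ‖·‖ is the Euclidean norm. -/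
/-!
Since `K_{k-1} ⊆ K_r` for `r < k`, the point `x_k` lies in every set `K_r` onto which an earlier
iterate is projected. Projection onto a convex set does not increase the distance to a point of
that set, so each step gives `‖x_{r+1} - x_k‖ ≤ ‖x_r - e_r - x_k‖ ≤ ‖x_r - x_k‖ + ‖e_r‖`, and
summing these one-step bounds for `r = i, …, j - 1` gives the claim.
-/

open scoped RealInnerProductSpace

theorem subset_of_forall_succ_subset_of_le {α : Type*} {K : ℕ → Set α} {T : ℕ}
    (hK : ∀ t, t < T → K (t + 1) ⊆ K t) {s t : ℕ} (hst : s ≤ t) (htT : t ≤ T) :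
    K t ⊆ K s := by
  induction t, hst using Nat.le_induction with
  | base => exact subset_rfl
  | succ t hst ih => exact (hK t (by omega)).trans (ih (by omega))

theorem le_add_sum_Ico_of_forall_succ_le_add {β : Type*} [AddCommMonoid β] [PartialOrder β]
    [IsOrderedAddMonoid β] {u c : ℕ → β} {i k : ℕ}
    (h : ∀ j, i ≤ j → j < k → u (j + 1) ≤ u j + c j) {j : ℕ} (hij : i ≤ j) (hjk : j ≤ k) :
    u j ≤ u i + ∑ r ∈ Finset.Ico i j, c r := by
  induction j, hij using Nat.le_induction with
  | base => simp
  | succ j hij ih =>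
    calc u (j + 1) ≤ u j + c j := h j hij (by omega)
      _ ≤ u i + ∑ r ∈ Finset.Ico i j, c r + c j := add_le_add_left (ih (by omega)) _
      _ = u i + ∑ r ∈ Finset.Ico i (j + 1), c r := by
        rw [Finset.sum_Ico_succ_top hij, add_assoc]

section InnerProductSpace

variable {E : Type*} [NormedAddCommGroup E] [InnerProductSpace ℝ E]

theorem norm_sub_le_of_inner_sub_nonpos {z p y : E} (h : ⟪z - p, y - p⟫ ≤ 0) :
    ‖p - y‖ ≤ ‖z - y‖ := by
  have hsq : ‖z - y‖ ^ 2 = ‖z - p‖ ^ 2 - 2 * ⟪z - p, y - p⟫ + ‖p - y‖ ^ 2 := by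
    rw [← sub_add_sub_cancel z p y, norm_add_sq_real, ← neg_sub y p, inner_neg_right]
    ring
  refine pow_le_pow_iff_left₀ (norm_nonneg _) (norm_nonneg _) two_ne_zero |>.mp ?_
  nlinarith [sq_nonneg ‖z - p‖]

theorem norm_sub_le_add_norm_of_inner_sub_nonpos {z e p y : E}
    (h : ⟪(z - e) - p, y - p⟫ ≤ 0) : ‖p - y‖ ≤ ‖z - y‖ + ‖e‖ :=
  calc ‖p - y‖ ≤ ‖(z - e) - y‖ := norm_sub_le_of_inner_sub_nonpos h
    _ = ‖(z - y) - e‖ := by rw [sub_right_comm]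
    _ ≤ ‖z - y‖ + ‖e‖ := norm_sub_le _ _

end InnerProductSpace

theorem perturbed_nested_projection_approx_self_contracted_general (d T : ℕ)
    (K : ℕ → Set (EuclideanSpace ℝ (Fin d)))
    (x e : ℕ → EuclideanSpace ℝ (Fin d))
    (hKnest : ∀ t, t < T → K (t + 1) ⊆ K t)
    (hproj : ∀ t, 1 ≤ t → t ≤ T → x (t + 1) ∈ K t ∧
      ∀ y ∈ K t, ⟪(x t - e t) - x (t + 1), y - x (t + 1)⟫ ≤ 0) :
    ∀ i j k, 1 ≤ i → i ≤ j → j ≤ k → k ≤ T + 1 →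
      ‖x j - x k‖ ≤ ‖x i - x k‖ + ∑ r ∈ Finset.Ico i j, ‖e r‖ := by
  intro i j k hi hij hjk hkT
  refine le_add_sum_Ico_of_forall_succ_le_add (u := fun r ↦ ‖x r - x k‖) (fun r hir hrk ↦ ?_)
    hij hjk
  have hxk : x k ∈ K r := by
    obtain ⟨k, rfl⟩ : ∃ k', k = k' + 1 := ⟨k - 1, by omega⟩
    exact subset_of_forall_succ_subset_of_le hKnest (by omega) (by omega)
      (hproj k (by omega) (by omega)).1
  exact norm_sub_le_add_norm_of_inner_sub_nonpos ((hproj r (by omega) (by omega)).2 _ hxk)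

/-- Approximate self-contraction property of perturbed nested projection iterates. -/
theorem perturbed_nested_projection_approx_self_contracted (d T : ℕ)
    (K : ℕ → Set (EuclideanSpace ℝ (Fin d)))
    (x e : ℕ → EuclideanSpace ℝ (Fin d))
    (hKne : ∀ t, t ≤ T → (K t).Nonempty)
    (hKcl : ∀ t, t ≤ T → IsClosed (K t))
    (hKcv : ∀ t, t ≤ T → Convex ℝ (K t))
    (hKnest : ∀ t, t < T → K (t + 1) ⊆ K t)
    (hx1 : x 1 ∈ K 0)
    (hproj : ∀ t, 1 ≤ t → t ≤ T → x (t + 1) ∈ K t ∧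
      ∀ y ∈ K t, ⟪(x t - e t) - x (t + 1), y - x (t + 1)⟫ ≤ 0) :
    ∀ i j k, 1 ≤ i → i ≤ j → j ≤ k → k ≤ T + 1 →
      ‖x j - x k‖ ≤ ‖x i - x k‖ + ∑ r ∈ Finset.Ico i j, ‖e r‖ :=
  perturbed_nested_projection_approx_self_contracted_general d T K x e hKnest hproj
end

section
/- Let x_1, …, x_{T+1} ∈ ℝ^d and e_1, …, e_T ∈ ℝ^d satisfy the approximate self-contraction property: for all 1 ≤ i ≤ j ≤ k ≤ T + 1, ‖x_j − x_k‖₂ ≤ ‖x_i − x_k‖₂ + Σ_{r=i}^{j−1} ‖e_r‖₂. Define tail budgets R_t = Σ_{r=t}^{T} ‖e_r‖₂ for 1 ≤ t ≤ T and R_{T+1} = 0, and lifted points A_t = (x_t, R_t) ∈ ℝ^d × ℝ. Then the sequence A_1, …, A_{T+1} is self-contracted with respect to the norm ‖(u, s)‖_⊕ := ‖u‖₂ + |s| on ℝ^d × ℝ; that is, for all 1 ≤ i ≤ j ≤ k ≤ T + 1, ‖A_k − A_j‖_⊕ ≤ ‖A_k − A_i‖_⊕. -/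
/-- The lift by a nonincreasing budget absorbs the perturbation: the `x`-part can grow by at
most `ri - rj`, and the budget coordinate shrinks by exactly that amount. -/
theorem norm_sub_add_abs_sub_le_of_norm_sub_le_add {E : Type*} [SeminormedAddCommGroup E]
    {xi xj xk : E} {ri rj rk : ℝ} (hkj : rk ≤ rj)
    (h : ‖xj - xk‖ ≤ ‖xi - xk‖ + (ri - rj)) :
    ‖xk - xj‖ + |rk - rj| ≤ ‖xk - xi‖ + |rk - ri| := by
  rw [norm_sub_rev xk xj, norm_sub_rev xk xi, abs_of_nonpos (sub_nonpos.mpr hkj)]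
  linarith [neg_le_abs (rk - ri)]

theorem Finset.sum_Icc_sub_sum_Icc {M : Type*} [AddCommGroup M] (f : ℕ → M) {a b T : ℕ}
    (hab : a ≤ b) (hb : b ≤ T + 1) :
    ∑ r ∈ Icc a T, f r - ∑ r ∈ Icc b T, f r = ∑ r ∈ Ico a b, f r := by
  rw [← Ico_add_one_right_eq_Icc, ← Ico_add_one_right_eq_Icc,
    ← sum_Ico_consecutive f hab hb, add_sub_cancel_right]

/-- The lifted sequence `A_t = (x_t, R_t)` is self-contracted with respect to the
norm `‖(u, s)‖_⊕ = ‖u‖₂ + |s|` on `ℝ^d × ℝ`, whenever the `x_t` satisfy the approximate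
self-contraction property with perturbations `e_t`. -/
theorem lifted_sequence_self_contracted (d T : ℕ)
    (x e : ℕ → EuclideanSpace ℝ (Fin d))
    (happrox : ∀ i j k, 1 ≤ i → i ≤ j → j ≤ k → k ≤ T + 1 →
      ‖x j - x k‖ ≤ ‖x i - x k‖ + ∑ r ∈ Finset.Ico i j, ‖e r‖)
    (R : ℕ → ℝ)
    (hR : ∀ t, 1 ≤ t → t ≤ T + 1 → R t = ∑ r ∈ Finset.Icc t T, ‖e r‖) :
    ∀ i j k, 1 ≤ i → i ≤ j → j ≤ k → k ≤ T + 1 →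
      ‖x k - x j‖ + |R k - R j| ≤ ‖x k - x i‖ + |R k - R i| := by
  have hR_sub : ∀ a b, 1 ≤ a → a ≤ b → b ≤ T + 1 → R a - R b = ∑ r ∈ Finset.Ico a b, ‖e r‖ :=
    fun a b ha hab hb => by
      rw [hR a ha (hab.trans hb), hR b (ha.trans hab) hb, Finset.sum_Icc_sub_sum_Icc _ hab hb]
  intro i j k hi hij hjk hk
  have hkj : R k ≤ R j := by
    rw [← sub_nonneg, hR_sub j k (hi.trans hij) hjk hk]
    exact Finset.sum_nonneg fun r _ => norm_nonneg (e r)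
  refine norm_sub_add_abs_sub_le_of_norm_sub_le_add hkj ?_
  rw [hR_sub i j hi hij (hjk.trans hk)]
  exact happrox i j k hi hij hjk hk
end

section
/- Let K_0 ⊇ K_1 ⊇ ⋯ ⊇ K_T be a nested sequence of nonempty closed convex subsets of ℝ^d, let x_1 ∈ K_0, and define the unperturbed nested projection iterates x_{t+1} = Π_{K_t}(x_t) for 1 ≤ t ≤ T. Then the sequence x_1, …, x_{T+1} is self-contracted with respect to the Euclidean norm: for all 1 ≤ i ≤ j ≤ k ≤ T + 1, ‖x_j − x_k‖ ≤ ‖x_i − x_k‖. -/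
open scoped RealInnerProductSpace

/-!
If `p ∈ K` satisfies `⟪z - p, y - p⟫ ≤ 0` for all `y ∈ K`, then `p` is at least as close as `z` to
every point of `K`. Since the sets are nested, every later iterate `x k` lies in all earlier sets
`K t`, so each projection step `x t ↦ x (t + 1)` with `t < k` does not increase the distance to
`x k`; hence `j ↦ ‖x j - x k‖` is antitone on `[1, k]`.
-/

theorem antitoneOn_nat_Icc_of_succ_le {β : Type*} [Preorder β] {f : ℕ → β} {a b : ℕ}
    (hf : ∀ n, a ≤ n → n < b → f (n + 1) ≤ f n) : AntitoneOn f (Set.Icc a b) :=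
  antitoneOn_of_succ_le Set.ordConnected_Icc fun n _ hn hn' => hf n hn.1 (by simpa using hn'.2)

theorem norm_sub_le_of_inner_nonpos {F : Type*} [NormedAddCommGroup F] [InnerProductSpace ℝ F]
    {z p y : F} (h : ⟪z - p, y - p⟫ ≤ 0) : ‖p - y‖ ≤ ‖z - y‖ := by
  have hinner : 0 ≤ ⟪z - p, p - y⟫ := by
    rw [← neg_sub y p, inner_neg_right]
    linarith
  have hsq : ‖z - y‖ ^ 2 = ‖z - p‖ ^ 2 + 2 * ⟪z - p, p - y⟫ + ‖p - y‖ ^ 2 := by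
    rw [← norm_add_sq_real, sub_add_sub_cancel]
  refine (sq_le_sq₀ (norm_nonneg _) (norm_nonneg _)).1 ?_
  nlinarith [sq_nonneg ‖z - p‖]

theorem nested_projection_self_contracted_general (d T : ℕ)
    (K : ℕ → Set (EuclideanSpace ℝ (Fin d)))
    (x : ℕ → EuclideanSpace ℝ (Fin d))
    (hKnest : ∀ t, t < T → K (t + 1) ⊆ K t)
    (hproj : ∀ t, 1 ≤ t → t ≤ T → x (t + 1) ∈ K t ∧
      ∀ y ∈ K t, ⟪x t - x (t + 1), y - x (t + 1)⟫ ≤ 0) :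
    ∀ i j k, 1 ≤ i → i ≤ j → j ≤ k → k ≤ T + 1 →
      ‖x j - x k‖ ≤ ‖x i - x k‖ := by
  have hK : AntitoneOn K (Set.Icc 0 T) :=
    antitoneOn_nat_Icc_of_succ_le fun t _ ht => hKnest t ht
  intro i j k hi hij hjk hkT
  obtain ⟨m, rfl⟩ : ∃ m, k = m + 1 := ⟨k - 1, by omega⟩
  have hdist : AntitoneOn (fun t => ‖x t - x (m + 1)‖) (Set.Icc 1 (m + 1)) := by
    refine antitoneOn_nat_Icc_of_succ_le fun t ht htm => ?_
    have hxm : x (m + 1) ∈ K t :=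
      hK ⟨t.zero_le, by omega⟩ ⟨m.zero_le, by omega⟩ (by omega) (hproj m (by omega) (by omega)).1
    exact norm_sub_le_of_inner_nonpos ((hproj t ht (by omega)).2 _ hxm)
  exact hdist ⟨hi, hij.trans hjk⟩ ⟨hi.trans hij, hjk⟩ hij

/-- Unperturbed nested projection iterates are self-contracted for the Euclidean norm. -/
theorem nested_projection_self_contracted (d T : ℕ)
    (K : ℕ → Set (EuclideanSpace ℝ (Fin d)))
    (x : ℕ → EuclideanSpace ℝ (Fin d))
    (hKne : ∀ t, t ≤ T → (K t).Nonempty)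
    (hKcl : ∀ t, t ≤ T → IsClosed (K t))
    (hKcv : ∀ t, t ≤ T → Convex ℝ (K t))
    (hKnest : ∀ t, t < T → K (t + 1) ⊆ K t)
    (hx1 : x 1 ∈ K 0)
    (hproj : ∀ t, 1 ≤ t → t ≤ T → x (t + 1) ∈ K t ∧
      ∀ y ∈ K t, ⟪x t - x (t + 1), y - x (t + 1)⟫ ≤ 0) :
    ∀ i j k, 1 ≤ i → i ≤ j → j ≤ k → k ≤ T + 1 →
      ‖x j - x k‖ ≤ ‖x i - x k‖ :=
  nested_projection_self_contracted_general d T K x hKnest hproj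
end

section
/- Let S ⊆ 𝒳 ⊆ ℝ^d with S nonempty, closed and convex, 𝒳 convex. Let x ∈ 𝒳, let η > 0, H ≥ 0, G ≥ 0, let f : ℝ^d → ℝ, and let h ∈ ℝ^d satisfy ‖h‖ ≤ G and f(y) ≥ f(x) + ⟨h, y − x⟩ + (H/2)‖y − x‖² for all y ∈ 𝒳. Set x⁺ = Π_S(x − η h). Then for every x* ∈ S ∩ 𝒳: f(x) − f(x*) ≤ (1/2)(1/η − H)‖x − x*‖² − (1/(2η))‖x⁺ − x*‖² + (η/2)G². -/
/-!
Expanding the squared distance to a point `y ∈ S` through the projection `p = Π_S(z)` gives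
`‖z - y‖² = ‖z - p‖² - 2⟪z - p, y - p⟫ + ‖p - y‖² ≥ ‖p - y‖²`, so projecting onto `S` does not
increase the distance to `x*`. With `z = x - η h`, expanding `‖x - η h - x*‖²` bounds `⟪h, x - x*⟫`
by the decrease of `‖· - x*‖²` over the step plus `(η/2)‖h‖²`, and the strong-convexity
inequality at `x*` turns this bound into the claimed one.
-/

open scoped RealInnerProductSpace

section InnerProductSpace

variable {E : Type*} [NormedAddCommGroup E] [InnerProductSpace ℝ E]

theorem norm_sub_sq_le_of_inner_sub_le_zero {z p y : E} (hzp : ⟪z - p, y - p⟫ ≤ 0) :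
    ‖p - y‖ ^ 2 ≤ ‖z - y‖ ^ 2 := by
  have hexpand : ‖z - y‖ ^ 2 = ‖z - p‖ ^ 2 - 2 * ⟪z - p, y - p⟫ + ‖y - p‖ ^ 2 := by
    rw [← norm_sub_sq_real, sub_sub_sub_cancel_right]
  rw [hexpand, norm_sub_rev p y]
  nlinarith [sq_nonneg ‖z - p‖]

theorem norm_sub_smul_sub_sq (x h y : E) (η : ℝ) :
    ‖x - η • h - y‖ ^ 2 = ‖x - y‖ ^ 2 - 2 * η * ⟪h, x - y⟫ + η ^ 2 * ‖h‖ ^ 2 := by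
  rw [sub_right_comm, norm_sub_sq_real, real_inner_smul_right, norm_smul, real_inner_comm,
    mul_pow, Real.norm_eq_abs, sq_abs]
  ring

theorem inner_le_of_projected_step {x h p y : E} {η : ℝ} (hη : 0 < η)
    (hproj : ⟪x - η • h - p, y - p⟫ ≤ 0) :
    ⟪h, x - y⟫ ≤ 1 / (2 * η) * (‖x - y‖ ^ 2 - ‖p - y‖ ^ 2) + η / 2 * ‖h‖ ^ 2 := by
  have hcloser := norm_sub_sq_le_of_inner_sub_le_zero hproj
  rw [norm_sub_smul_sub_sq] at hcloser
  have hstep : 2 * η * ⟪h, x - y⟫ ≤ ‖x - y‖ ^ 2 - ‖p - y‖ ^ 2 + η ^ 2 * ‖h‖ ^ 2 := by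
    linarith
  calc ⟪h, x - y⟫ = 1 / (2 * η) * (2 * η * ⟪h, x - y⟫) := by field_simp
    _ ≤ 1 / (2 * η) * (‖x - y‖ ^ 2 - ‖p - y‖ ^ 2 + η ^ 2 * ‖h‖ ^ 2) := by gcongr
    _ = 1 / (2 * η) * (‖x - y‖ ^ 2 - ‖p - y‖ ^ 2) + η / 2 * ‖h‖ ^ 2 := by field_simp

end InnerProductSpace

theorem projected_subgradient_step_descent_general (d : ℕ)
    (X S : Set (EuclideanSpace ℝ (Fin d)))
    (x : EuclideanSpace ℝ (Fin d))
    (η H G : ℝ) (hη : 0 < η)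
    (f : EuclideanSpace ℝ (Fin d) → ℝ)
    (h : EuclideanSpace ℝ (Fin d)) (hh : ‖h‖ ≤ G)
    (hsub : ∀ y ∈ X, f y ≥ f x + ⟪h, y - x⟫ + H / 2 * ‖y - x‖ ^ 2)
    (xp : EuclideanSpace ℝ (Fin d))
    (hproj : ∀ y ∈ S, ⟪(x - η • h) - xp, y - xp⟫ ≤ 0)
    (xstar : EuclideanSpace ℝ (Fin d)) (hxstar : xstar ∈ S ∩ X) :
    f x - f xstar ≤ 1 / 2 * (1 / η - H) * ‖x - xstar‖ ^ 2
      - 1 / (2 * η) * ‖xp - xstar‖ ^ 2 + η / 2 * G ^ 2 := by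
  have hstep := inner_le_of_projected_step hη (hproj xstar hxstar.1)
  have hconv := hsub xstar hxstar.2
  rw [norm_sub_rev, ← neg_sub x xstar, inner_neg_right] at hconv
  have hG : η / 2 * ‖h‖ ^ 2 ≤ η / 2 * G ^ 2 := by
    gcongr
  linear_combination hconv + hstep + hG

/-- One-step descent inequality for a projected (sub)gradient step with
strong-convexity parameter `H`. -/
theorem projected_subgradient_step_descent (d : ℕ)
    (X S : Set (EuclideanSpace ℝ (Fin d)))
    (hSne : S.Nonempty) (hScl : IsClosed S) (hScv : Convex ℝ S)
    (hXcv : Convex ℝ X) (hSX : S ⊆ X)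
    (x : EuclideanSpace ℝ (Fin d)) (hx : x ∈ X)
    (η H G : ℝ) (hη : 0 < η) (hH : 0 ≤ H) (hG : 0 ≤ G)
    (f : EuclideanSpace ℝ (Fin d) → ℝ)
    (h : EuclideanSpace ℝ (Fin d)) (hh : ‖h‖ ≤ G)
    (hsub : ∀ y ∈ X, f y ≥ f x + ⟪h, y - x⟫ + H / 2 * ‖y - x‖ ^ 2)
    (xp : EuclideanSpace ℝ (Fin d)) (hxp : xp ∈ S)
    (hproj : ∀ y ∈ S, ⟪(x - η • h) - xp, y - xp⟫ ≤ 0)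
    (xstar : EuclideanSpace ℝ (Fin d)) (hxstar : xstar ∈ S ∩ X) :
    f x - f xstar ≤ 1 / 2 * (1 / η - H) * ‖x - xstar‖ ^ 2
      - 1 / (2 * η) * ‖xp - xstar‖ ^ 2 + η / 2 * G ^ 2 :=
  projected_subgradient_step_descent_general d X S x η H G hη f h hh hsub xp hproj xstar hxstar
end

section
/- Let 𝒳 ⊆ ℝ^d be a nonempty closed convex set of diameter at most D, let G > 0 and μ > 0. For t = 1, …, T, let S_t be nonempty closed convex subsets with 𝒳 = S_0 ⊇ S_1 ⊇ ⋯ ⊇ S_T, let f_t : ℝ^d → ℝ, and let h_t ∈ ℝ^d satisfy ‖h_t‖ ≤ G and the μ-strong-convexity subgradient inequality f_t(y) ≥ f_t(x_t) + ⟨h_t, y − x_t⟩ + (μ/2)‖y − x_t‖² for all y ∈ 𝒳. Run Nested Projected OGD with step sizes η_t = 1/(μt): x_1 ∈ 𝒳 and x_{t+1} = Π_{S_t}(x_t − η_t h_t). Then for every x* ∈ S_T: Σ_{t=1}^{T} (f_t(x_t) − f_t(x*)) ≤ (G²/(2μ)) · (1 + log T). -/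
open scoped RealInnerProductSpace

/-! Strong convexity with `η_t = 1/(μt)` turns the usual projected-gradient estimate into
`f_t(x_t) - f_t(x*) ≤ μ(t-1)/2 ‖x_t - x*‖² - μt/2 ‖x_{t+1} - x*‖² + G²/(2μt)`.
The comparator `x*` lies in every `S_t` because the sets are nested, so each projection brings
the iterate closer to it. The distance terms telescope to a nonpositive quantity, and the
remaining terms sum to `G²/(2μ)` times the harmonic number `H_T ≤ 1 + log T`. -/

section ProjectedStep

variable {E : Type*} [NormedAddCommGroup E] [InnerProductSpace ℝ E]

theorem norm_sub_sq_le_of_inner_sub_nonpos {z p w : E} (hp : ⟪z - p, w - p⟫ ≤ 0) :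
    ‖p - w‖ ^ 2 ≤ ‖z - w‖ ^ 2 := by
  have hsplit : z - w = (z - p) + (p - w) := by abel
  have hflip : ⟪z - p, p - w⟫ = -⟪z - p, w - p⟫ := by
    rw [← inner_neg_right, neg_sub]
  rw [hsplit, norm_add_sq_real, hflip]
  nlinarith [sq_nonneg ‖z - p‖]

theorem two_mul_inner_le_of_proj_step {g x p y : E} {η : ℝ}
    (hp : ⟪(x - η • g) - p, y - p⟫ ≤ 0) :
    2 * η * ⟪g, x - y⟫ ≤ ‖x - y‖ ^ 2 - ‖p - y‖ ^ 2 + η ^ 2 * ‖g‖ ^ 2 := by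
  have hexpand :
      ‖(x - η • g) - y‖ ^ 2 = ‖x - y‖ ^ 2 - 2 * η * ⟪g, x - y⟫ + η ^ 2 * ‖g‖ ^ 2 := by
    rw [show (x - η • g) - y = (x - y) - η • g by abel, norm_sub_sq_real,
      real_inner_smul_right, norm_smul, Real.norm_eq_abs, mul_pow, sq_abs, real_inner_comm]
    ring
  linarith [norm_sub_sq_le_of_inner_sub_nonpos hp]

theorem sub_le_of_strongly_convex_proj_step {f : E → ℝ} {g x p y : E} {μ G t : ℝ}
    (hμ : 0 < μ) (ht : 0 < t) (hg : ‖g‖ ≤ G)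
    (hf : f y ≥ f x + ⟪g, y - x⟫ + μ / 2 * ‖y - x‖ ^ 2)
    (hp : ⟪(x - (1 / (μ * t)) • g) - p, y - p⟫ ≤ 0) :
    f x - f y ≤ μ * (t - 1) / 2 * ‖x - y‖ ^ 2 - μ * t / 2 * ‖p - y‖ ^ 2
      + G ^ 2 / (2 * μ) * t⁻¹ := by
  have hstep := two_mul_inner_le_of_proj_step hp
  have hinner : ⟪g, x - y⟫ ≤ μ * t / 2 * (‖x - y‖ ^ 2 - ‖p - y‖ ^ 2)
      + ‖g‖ ^ 2 / (2 * μ) * t⁻¹ := by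
    have hμt : 0 < μ * t := mul_pos hμ ht
    have := mul_le_mul_of_nonneg_left hstep (le_of_lt (half_pos hμt))
    field_simp at this ⊢
    linarith
  have hgG : ‖g‖ ^ 2 ≤ G ^ 2 := pow_le_pow_left₀ (norm_nonneg g) hg 2
  have hgap : ‖g‖ ^ 2 / (2 * μ) * t⁻¹ ≤ G ^ 2 / (2 * μ) * t⁻¹ := by
    gcongr
  rw [← neg_sub x y, inner_neg_right, norm_neg] at hf
  linarith

end ProjectedStep

theorem subset_of_nested {α : Type*} {S : ℕ → Set α} {T : ℕ}
    (hS : ∀ t, t < T → S (t + 1) ⊆ S t) {t : ℕ} (ht : t ≤ T) : S T ⊆ S t :=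
  Nat.decreasingInduction (fun k hk ih => ih.trans (hS k hk)) le_rfl ht

theorem Finset.sum_Icc_sub_succ {M : Type*} [AddCommGroup M] (ψ : ℕ → M) (T : ℕ) :
    ∑ t ∈ Finset.Icc 1 T, (ψ t - ψ (t + 1)) = ψ 1 - ψ (T + 1) := by
  simpa only [neg_sub_neg, Finset.Ico_add_one_right_eq_Icc] using
    Finset.sum_Ico_sub (f := fun t => -ψ t) (Nat.le_add_left 1 T)

theorem sum_Icc_inv_le_one_add_log (T : ℕ) :
    ∑ t ∈ Finset.Icc 1 T, ((t : ℝ))⁻¹ ≤ 1 + Real.log T := by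
  simpa [harmonic_eq_sum_Icc] using harmonic_le_one_add_log T

theorem np_ogd_regret_strongly_convex_general (d T : ℕ) (G μ : ℝ)
    (hμ : 0 < μ)
    (X : Set (EuclideanSpace ℝ (Fin d)))
    (S : ℕ → Set (EuclideanSpace ℝ (Fin d)))
    (hS0 : S 0 = X)
    (hSnest : ∀ t, t < T → S (t + 1) ⊆ S t)
    (f : ℕ → EuclideanSpace ℝ (Fin d) → ℝ)
    (h x : ℕ → EuclideanSpace ℝ (Fin d))
    (hh : ∀ t, 1 ≤ t → t ≤ T → ‖h t‖ ≤ G)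
    (hsub : ∀ t, 1 ≤ t → t ≤ T → ∀ y ∈ X,
      f t y ≥ f t (x t) + ⟪h t, y - x t⟫ + μ / 2 * ‖y - x t‖ ^ 2)
    (hproj : ∀ t, 1 ≤ t → t ≤ T → x (t + 1) ∈ S t ∧
      ∀ y ∈ S t, ⟪(x t - (1 / (μ * t)) • h t) - x (t + 1), y - x (t + 1)⟫ ≤ 0)
    (xstar : EuclideanSpace ℝ (Fin d)) (hxstar : xstar ∈ S T) :
    ∑ t ∈ Finset.Icc 1 T, (f t (x t) - f t xstar) ≤
      G ^ 2 / (2 * μ) * (1 + Real.log T) := by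
  set ψ : ℕ → ℝ := fun t => μ * ((t : ℝ) - 1) / 2 * ‖x t - xstar‖ ^ 2
  have hstep : ∀ t ∈ Finset.Icc 1 T,
      f t (x t) - f t xstar ≤ (ψ t - ψ (t + 1)) + G ^ 2 / (2 * μ) * ((t : ℝ))⁻¹ := by
    intro t ht
    obtain ⟨h1, hT⟩ := Finset.mem_Icc.mp ht
    have hxstarX : xstar ∈ X := hS0 ▸ subset_of_nested hSnest (Nat.zero_le T) hxstar
    have := sub_le_of_strongly_convex_proj_step hμ (by positivity) (hh t h1 hT)
      (hsub t h1 hT xstar hxstarX)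
      ((hproj t h1 hT).2 xstar (subset_of_nested hSnest hT hxstar))
    simpa only [ψ, Nat.cast_add, Nat.cast_one, add_sub_cancel_right] using this
  have htelescope : ∑ t ∈ Finset.Icc 1 T, (ψ t - ψ (t + 1)) ≤ 0 := by
    have hfirst : ψ 1 = 0 := by
      simp only [ψ, Nat.cast_one, sub_self, mul_zero, zero_div, zero_mul]
    have hlast : 0 ≤ ψ (T + 1) := by
      simp only [ψ, Nat.cast_add, Nat.cast_one, add_sub_cancel_right]
      positivity
    rw [Finset.sum_Icc_sub_succ, hfirst]
    linarith
  calc ∑ t ∈ Finset.Icc 1 T, (f t (x t) - f t xstar)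
      ≤ ∑ t ∈ Finset.Icc 1 T, ((ψ t - ψ (t + 1)) + G ^ 2 / (2 * μ) * ((t : ℝ))⁻¹) :=
        Finset.sum_le_sum hstep
    _ ≤ 0 + G ^ 2 / (2 * μ) * (1 + Real.log T) := by
        rw [Finset.sum_add_distrib, ← Finset.mul_sum]
        gcongr
        exact sum_Icc_inv_le_one_add_log T
    _ = G ^ 2 / (2 * μ) * (1 + Real.log T) := zero_add _

/-- Regret bound for Nested Projected OGD with step sizes `η_t = 1/(μt)` for
`μ`-strongly convex losses: the regret is at most `(G²/(2μ))(1 + log T)`. -/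
theorem np_ogd_regret_strongly_convex (d T : ℕ) (D G μ : ℝ)
    (hD : 0 ≤ D) (hG : 0 < G) (hμ : 0 < μ)
    (X : Set (EuclideanSpace ℝ (Fin d)))
    (hXne : X.Nonempty) (hXcl : IsClosed X) (hXcv : Convex ℝ X)
    (hXdiam : ∀ u ∈ X, ∀ v ∈ X, ‖u - v‖ ≤ D)
    (S : ℕ → Set (EuclideanSpace ℝ (Fin d)))
    (hS0 : S 0 = X)
    (hSne : ∀ t, t ≤ T → (S t).Nonempty)
    (hScl : ∀ t, t ≤ T → IsClosed (S t))
    (hScv : ∀ t, t ≤ T → Convex ℝ (S t))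
    (hSnest : ∀ t, t < T → S (t + 1) ⊆ S t)
    (f : ℕ → EuclideanSpace ℝ (Fin d) → ℝ)
    (h x : ℕ → EuclideanSpace ℝ (Fin d))
    (hh : ∀ t, 1 ≤ t → t ≤ T → ‖h t‖ ≤ G)
    (hsub : ∀ t, 1 ≤ t → t ≤ T → ∀ y ∈ X,
      f t y ≥ f t (x t) + ⟪h t, y - x t⟫ + μ / 2 * ‖y - x t‖ ^ 2)
    (hx1 : x 1 ∈ X)
    (hproj : ∀ t, 1 ≤ t → t ≤ T → x (t + 1) ∈ S t ∧
      ∀ y ∈ S t, ⟪(x t - (1 / (μ * t)) • h t) - x (t + 1), y - x (t + 1)⟫ ≤ 0)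
    (xstar : EuclideanSpace ℝ (Fin d)) (hxstar : xstar ∈ S T) :
    ∑ t ∈ Finset.Icc 1 T, (f t (x t) - f t xstar) ≤
      G ^ 2 / (2 * μ) * (1 + Real.log T) :=
  np_ogd_regret_strongly_convex_general d T G μ hμ X S hS0 hSnest f h x hh hsub hproj xstar hxstar
end
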